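/- General upper bound on the ZRP Poincaré constant: if P is an n×n doubly stochastic matrix and the rates are homogeneous r(x,k) = r(k), then λ(ZRP(P,r,m)) ≤ (1 − 1/n) λ(P) E_μ[r(ζ)]/Var_μ(ζ), where ζ is the number of particles on a fixed site under the stationary law μ. -/

import Mathlib

open Finset

variable (V : Type*) [Fintype V] [DecidableEq V]

/-- Product-form (unnormalized) stationary weight of a configuration. -/
noncomputable def weight (π : V → ℝ) (r : V → ℕ → ℝ) (η : V → ℕ) : ℝ :=
  ∏ x, ∏ k ∈ Finset.Icc 1 (η x), π x / r x k

/-- Add one particle at site `x` : the configuration `η + δ_x`. -/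
def addOne (η : V → ℕ) (x : V) : V → ℕ := Function.update η x (η x + 1)

/-- Move a particle from `x` to `y`: the configuration `η + δ_y - δ_x`. -/
def move (η : V → ℕ) (x y : V) : V → ℕ :=
  addOne V (Function.update η x (η x - 1)) y

/-- The set of configurations of `m` particles on `V`. -/
def configs (m : ℕ) : Finset (V → ℕ) :=
  (Fintype.piFinset fun _ : V => Finset.range (m + 1)).filter fun η => ∑ x, η x = m

/-- Single-particle Dirichlet form `⟨φ, (I - P) ψ⟩_π`. -/
noncomputable def EP (π : V → ℝ) (P : V → V → ℝ) (φ ψ : V → ℝ) : ℝ :=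
  ∑ x, ∑ y, π x * P x y * (φ x * (ψ x - ψ y))

/-- Zero-range Dirichlet form with jump matrix `P`, rates `r` and measure `μ`
on configurations with `m` particles. -/
noncomputable def EZRP (P : V → V → ℝ) (r : V → ℕ → ℝ) (μ : (V → ℕ) → ℝ) (m : ℕ)
    (f g : (V → ℕ) → ℝ) : ℝ :=
  ∑ η ∈ configs V m, ∑ x, ∑ y,
    μ η * r x (η x) * P x y * (f η * (g η - g (move V η x y)))

/-- Mean of an observable on `m`-particle configurations under `μ`. -/
noncomputable def meanOn (m : ℕ) (μ : (V → ℕ) → ℝ) (f : (V → ℕ) → ℝ) : ℝ :=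
  ∑ η ∈ configs V m, μ η * f η

/-- Variance of an observable on `m`-particle configurations under `μ`. -/
noncomputable def varOn (m : ℕ) (μ : (V → ℕ) → ℝ) (f : (V → ℕ) → ℝ) : ℝ :=
  meanOn V m μ (fun η => (f η) ^ 2) - (meanOn V m μ f) ^ 2

/-- Variance of `φ : V → ℝ` under the probability vector `π`. -/
noncomputable def varPi (π : V → ℝ) (φ : V → ℝ) : ℝ :=
  ∑ x, π x * (φ x) ^ 2 - (∑ x, π x * φ x) ^ 2


/-!
Test the Poincaré inequality of the zero-range process against the linear lift
`f η = ∑ z, φ z * η z` of an optimal single-particle function `φ`.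

Since a jump `x → y` changes `f` by `φ y - φ x`, the Dirichlet form of `f` is
`∑ x, ((I - P) φ) x * E_μ[r(η x) f]`. Removing one particle at `x` (product form of `μ`) makes
`E_μ[r(η x) f]` affine in `φ x` with slope `E_μ[r(ζ)]`, and the constant part is killed by
stationarity of the uniform law; hence `E_ZRP(f, f) = n E_μ[r(ζ)] E_P(φ, φ)`. On the other
side, exchangeability and the conservation law `∑ z, η z = m` give
`(n - 1) Var_μ f = n² Var_μ(ζ) Var_π φ`. Dividing yields the bound.
-/

variable {V}

section Configurations

variable {m : ℕ} {η ξ : V → ℕ} {x : V}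

theorem mem_configs : η ∈ configs V m ↔ ∑ z, η z = m := by
  refine ⟨fun h => (Finset.mem_filter.mp h).2, fun h => Finset.mem_filter.mpr ⟨?_, h⟩⟩
  refine Fintype.mem_piFinset.mpr fun z => Finset.mem_range_succ_iff.mpr ?_
  exact h ▸ Finset.single_le_sum (fun _ _ => Nat.zero_le _) (Finset.mem_univ z)

theorem single_mem_configs (x : V) (m : ℕ) : Pi.single x m ∈ configs V m :=
  mem_configs.mpr (Fintype.sum_pi_single' x m)

omit [Fintype V] in
theorem addOne_apply_self : addOne V ξ x x = ξ x + 1 := Function.update_self ..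

theorem sum_addOne : ∑ z, addOne V ξ x z = ∑ z, ξ z + 1 := by
  rw [addOne, Finset.sum_update_of_mem (Finset.mem_univ x),
    Finset.sum_eq_add_sum_sdiff_singleton_of_mem (Finset.mem_univ x) ξ]
  ring

omit [Fintype V] in
theorem addOne_update_pred (h : η x ≠ 0) :
    addOne V (Function.update η x (η x - 1)) x = η := by
  rw [addOne, Function.update_idem, Function.update_self, Nat.sub_add_cancel
    (Nat.one_le_iff_ne_zero.mpr h), Function.update_eq_self]

omit [Fintype V] in
theorem update_addOne_pred : Function.update (addOne V ξ x) x (addOne V ξ x x - 1) = ξ := by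
  rw [addOne_apply_self, addOne, Function.update_idem, Nat.add_sub_cancel, Function.update_eq_self]

theorem sum_filter_configs_succ (x : V) (h : (V → ℕ) → ℝ) :
    ∑ η ∈ (configs V (m + 1)).filter (fun η => η x ≠ 0), h η
      = ∑ ξ ∈ configs V m, h (addOne V ξ x) := by
  refine Finset.sum_nbij' (fun η => Function.update η x (η x - 1)) (fun ξ => addOne V ξ x)
    ?_ ?_ ?_ ?_ ?_
  · intro η hη
    obtain ⟨hη, hx⟩ := Finset.mem_filter.mp hη
    rw [mem_configs, ← Nat.add_right_cancel_iff (n := 1), ← sum_addOne, addOne_update_pred hx]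
    exact mem_configs.mp hη
  · intro ξ hξ
    refine Finset.mem_filter.mpr ⟨mem_configs.mpr ?_, ?_⟩
    · rw [sum_addOne, mem_configs.mp hξ]
    · rw [addOne_apply_self]; exact Nat.succ_ne_zero _
  · intro η hη
    exact addOne_update_pred (Finset.mem_filter.mp hη).2
  · intro ξ _
    exact update_addOne_pred
  · intro η hη
    rw [addOne_update_pred (Finset.mem_filter.mp hη).2]

theorem sum_configs_comp_perm (σ : Equiv.Perm V) (h : (V → ℕ) → ℝ) :
    ∑ η ∈ configs V m, h (η ∘ σ) = ∑ η ∈ configs V m, h η := by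
  refine Finset.sum_equiv (Equiv.arrowCongr σ.symm (Equiv.refl ℕ)) (fun η => ?_) (fun η _ => ?_)
  · simp only [mem_configs, Equiv.arrowCongr_apply, Equiv.symm_symm, Equiv.coe_refl,
      Function.comp_apply, id]
    rw [Equiv.sum_comp σ η]
  · rfl

end Configurations

section Weights

variable {π : V → ℝ} {r : V → ℕ → ℝ}

theorem weight_addOne (π : V → ℝ) (r : V → ℕ → ℝ) (ξ : V → ℕ) (x : V) :
    weight V π r (addOne V ξ x) = π x / r x (ξ x + 1) * weight V π r ξ := by
  have hupd := Function.apply_update (fun z j => ∏ k ∈ Finset.Icc 1 j, π z / r z k) ξ x (ξ x + 1)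
  rw [weight, weight, addOne, Finset.prod_congr rfl fun z _ => hupd z,
    Finset.prod_update_of_mem (Finset.mem_univ x),
    Finset.prod_eq_mul_prod_sdiff_singleton_of_mem (Finset.mem_univ x),
    Finset.prod_Icc_succ_top (Nat.le_add_left 1 _)]
  ring

omit [DecidableEq V] in
theorem weight_comp_perm (c : ℝ) (r : ℕ → ℝ) (σ : Equiv.Perm V) (η : V → ℕ) :
    weight V (fun _ => c) (fun _ => r) (η ∘ σ) = weight V (fun _ => c) (fun _ => r) η :=
  Equiv.prod_comp σ fun z => ∏ k ∈ Finset.Icc 1 (η z), c / r k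

omit [DecidableEq V] in
theorem weight_pos (hπ : ∀ x, 0 < π x) (hr : ∀ x k, 1 ≤ k → 0 < r x k) (η : V → ℕ) :
    0 < weight V π r η :=
  Finset.prod_pos fun x _ => Finset.prod_pos fun k hk =>
    div_pos (hπ x) (hr x k (Finset.mem_Icc.mp hk).1)

/-- Conditioning on an occupied site `x`: removing one of its particles turns the rate
`r x (η x)` into the fugacity `π x`. -/
theorem sum_weight_mul_rate {m : ℕ} {x : V} (hr0 : r x 0 = 0) (hr : ∀ k, r x (k + 1) ≠ 0)
    (g : (V → ℕ) → ℝ) :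
    ∑ η ∈ configs V (m + 1), weight V π r η * (r x (η x) * g η)
      = π x * ∑ ξ ∈ configs V m, weight V π r ξ * g (addOne V ξ x) := by
  rw [← Finset.sum_filter_of_ne (p := fun η => η x ≠ 0), sum_filter_configs_succ, Finset.mul_sum]
  · refine Finset.sum_congr rfl fun ξ _ => ?_
    rw [weight_addOne, addOne_apply_self]
    field_simp [hr (ξ x)]
  · intro η _ h hx
    rw [hx, hr0] at h
    simp at h

end Weights

noncomputable def partitionFn (π : V → ℝ) (r : V → ℕ → ℝ) (m : ℕ) : ℝ :=
  ∑ η ∈ configs V m, weight V π r η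

noncomputable def stationaryLaw (π : V → ℝ) (r : V → ℕ → ℝ) (m : ℕ) (η : V → ℕ) : ℝ :=
  weight V π r η / partitionFn π r m

section StationaryLaw

variable {π : V → ℝ} {r : V → ℕ → ℝ} {m : ℕ}

theorem partitionFn_pos [Nonempty V] (hπ : ∀ x, 0 < π x) (hr : ∀ x k, 1 ≤ k → 0 < r x k) :
    0 < partitionFn π r m :=
  Finset.sum_pos (fun η _ => weight_pos hπ hr η)
    ⟨_, single_mem_configs (Classical.arbitrary V) m⟩

theorem sum_stationaryLaw (h : partitionFn π r m ≠ 0) :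
    ∑ η ∈ configs V m, stationaryLaw π r m η = 1 := by
  simp only [stationaryLaw]
  rw [← Finset.sum_div, ← partitionFn, div_self h]

theorem stationaryLaw_pos [Nonempty V] (hπ : ∀ x, 0 < π x) (hr : ∀ x k, 1 ≤ k → 0 < r x k)
    (η : V → ℕ) : 0 < stationaryLaw π r m η :=
  div_pos (weight_pos hπ hr η) (partitionFn_pos hπ hr)

theorem stationaryLaw_comp_perm (c : ℝ) (r : ℕ → ℝ) (σ : Equiv.Perm V) (η : V → ℕ) :
    stationaryLaw (fun _ => c) (fun _ => r) m (η ∘ σ)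
      = stationaryLaw (fun _ => c) (fun _ => r) m η := by
  rw [stationaryLaw, stationaryLaw, weight_comp_perm]

theorem meanOn_stationaryLaw (f : (V → ℕ) → ℝ) :
    meanOn V m (stationaryLaw π r m) f
      = (∑ η ∈ configs V m, weight V π r η * f η) / partitionFn π r m := by
  rw [meanOn, Finset.sum_div]
  exact Finset.sum_congr rfl fun η _ => div_mul_eq_mul_div _ _ _

theorem meanOn_rate_mul {x : V} (hr0 : r x 0 = 0) (hr : ∀ k, r x (k + 1) ≠ 0)
    (g : (V → ℕ) → ℝ) :
    meanOn V (m + 1) (stationaryLaw π r (m + 1)) (fun η => r x (η x) * g η)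
      = π x * (∑ ξ ∈ configs V m, weight V π r ξ * g (addOne V ξ x))
        / partitionFn π r (m + 1) := by
  rw [meanOn_stationaryLaw, sum_weight_mul_rate hr0 hr]

theorem meanOn_rate {x : V} (hr0 : r x 0 = 0) (hr : ∀ k, r x (k + 1) ≠ 0) :
    meanOn V (m + 1) (stationaryLaw π r (m + 1)) (fun η => r x (η x))
      = π x * partitionFn π r m / partitionFn π r (m + 1) := by
  simpa only [mul_one, partitionFn] using meanOn_rate_mul (π := π) (m := m) hr0 hr fun _ => 1

end StationaryLaw

noncomputable def linearLift (φ : V → ℝ) (η : V → ℕ) : ℝ :=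
  ∑ z, φ z * η z

section LinearLift

variable {η : V → ℕ} {x : V}

theorem linearLift_addOne (φ : V → ℝ) (ξ : V → ℕ) (x : V) :
    linearLift φ (addOne V ξ x) = linearLift φ ξ + φ x := by
  have hupd : (fun z => φ z * (addOne V ξ x z : ℝ))
      = Function.update (fun z => φ z * (ξ z : ℝ)) x (φ x * (ξ x + 1)) := by
    funext z
    rcases eq_or_ne z x with rfl | hzx
    · simp [addOne_apply_self]
    · simp [addOne, hzx]
  rw [linearLift, linearLift, hupd, Finset.sum_update_of_mem (Finset.mem_univ x),
    Finset.sum_eq_add_sum_sdiff_singleton_of_mem (Finset.mem_univ x)]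
  ring

theorem linearLift_move (φ : V → ℝ) (hx : η x ≠ 0) (y : V) :
    linearLift φ (move V η x y) = linearLift φ η - φ x + φ y := by
  have hremove := linearLift_addOne φ (Function.update η x (η x - 1)) x
  rw [addOne_update_pred hx] at hremove
  rw [move, linearLift_addOne, hremove]
  ring

theorem linearLift_sq {m : ℕ} (hη : η ∈ configs V m) (φ : V → ℝ) :
    linearLift φ η ^ 2 = ∑ z, m * (φ z ^ 2 * η z)
      - ∑ z, ∑ z', (φ z - φ z') ^ 2 / 2 * ((η z : ℝ) * η z') := by
  have hsum : ∑ z, (η z : ℝ) = m := by rw [← Nat.cast_sum, mem_configs.mp hη]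
  have hexpand : ∀ z z', (φ z - φ z') ^ 2 / 2 * ((η z : ℝ) * η z')
      = (φ z ^ 2 * η z) * η z' / 2 + η z * (φ z' ^ 2 * η z') / 2
        - (φ z * η z) * (φ z' * η z') := fun _ _ => by ring
  simp only [hexpand, Finset.sum_add_distrib, Finset.sum_sub_distrib, ← Finset.sum_div,
    ← Finset.mul_sum, ← Finset.sum_mul, hsum, linearLift]
  ring

omit [DecidableEq V] in
theorem EP_self (π : V → ℝ) {P : V → V → ℝ} (hrow : ∀ x, ∑ y, P x y = 1) (φ : V → ℝ) :
    EP V π P φ φ = ∑ x, π x * φ x * (φ x - ∑ y, P x y * φ y) := by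
  refine Finset.sum_congr rfl fun x _ => ?_
  calc ∑ y, π x * P x y * (φ x * (φ x - φ y))
      = ∑ y, (π x * φ x * φ x * P x y - π x * φ x * (P x y * φ y)) :=
        Finset.sum_congr rfl fun y _ => by ring
    _ = π x * φ x * (φ x - ∑ y, P x y * φ y) := by
        rw [Finset.sum_sub_distrib, ← Finset.mul_sum, ← Finset.mul_sum, hrow]
        ring

theorem EZRP_linearLift {P : V → V → ℝ} (hrow : ∀ x, ∑ y, P x y = 1) {r : V → ℕ → ℝ}
    (hr0 : ∀ x, r x 0 = 0) (μ : (V → ℕ) → ℝ) (m : ℕ) (φ : V → ℝ) :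
    EZRP V P r μ m (linearLift φ) (linearLift φ)
      = ∑ x, (φ x - ∑ y, P x y * φ y) * meanOn V m μ (fun η => r x (η x) * linearLift φ η) := by
  have hjump : ∀ η x, ∑ y, μ η * r x (η x) * P x y
        * (linearLift φ η * (linearLift φ η - linearLift φ (move V η x y)))
      = (φ x - ∑ y, P x y * φ y) * (μ η * (r x (η x) * linearLift φ η)) := by
    intro η x
    rcases eq_or_ne (η x) 0 with hx | hx
    · simp [hx, hr0]
    calc _ = ∑ y, μ η * (r x (η x) * linearLift φ η) * (φ x * P x y - P x y * φ y) :=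
          Finset.sum_congr rfl fun y _ => by rw [linearLift_move φ hx]; ring
      _ = _ := by rw [← Finset.mul_sum, Finset.sum_sub_distrib, ← Finset.mul_sum, hrow]; ring
  simp only [EZRP, meanOn, hjump, Finset.mul_sum]
  exact Finset.sum_comm

theorem EZRP_linearLift_stationaryLaw {P : V → V → ℝ} (hrow : ∀ x, ∑ y, P x y = 1)
    {π : V → ℝ} (hstat : ∀ y, ∑ x, π x * P x y = π y) {r : V → ℕ → ℝ}
    (hr0 : ∀ x, r x 0 = 0) (hr : ∀ x k, r x (k + 1) ≠ 0) (m : ℕ) (φ : V → ℝ) :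
    EZRP V P r (stationaryLaw π r (m + 1)) (m + 1) (linearLift φ) (linearLift φ)
      = partitionFn π r m / partitionFn π r (m + 1) * EP V π P φ φ := by
  set F := ∑ ξ ∈ configs V m, weight V π r ξ * linearLift φ ξ
  have hmean : ∀ x, meanOn V (m + 1) (stationaryLaw π r (m + 1))
      (fun η => r x (η x) * linearLift φ η)
        = π x * (F + φ x * partitionFn π r m) / partitionFn π r (m + 1) := by
    intro x
    simp only [meanOn_rate_mul (hr0 x) (hr x), linearLift_addOne, mul_add, Finset.sum_add_distrib,
      ← Finset.sum_mul, partitionFn, F]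
    ring
  have hbalance : ∑ x, π x * (φ x - ∑ y, P x y * φ y) = 0 := by
    simp only [mul_sub, Finset.sum_sub_distrib, Finset.mul_sum]
    rw [Finset.sum_comm, sub_eq_zero]
    refine Finset.sum_congr rfl fun y _ => ?_
    rw [← hstat y, Finset.sum_mul]
    exact Finset.sum_congr rfl fun x _ => by ring
  calc _ = F / partitionFn π r (m + 1) * ∑ x, π x * (φ x - ∑ y, P x y * φ y)
        + partitionFn π r m / partitionFn π r (m + 1)
          * ∑ x, π x * φ x * (φ x - ∑ y, P x y * φ y) := by
        simp only [EZRP_linearLift hrow hr0, hmean, Finset.mul_sum, ← Finset.sum_add_distrib]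
        exact Finset.sum_congr rfl fun x _ => by ring
    _ = _ := by rw [hbalance, EP_self π hrow, mul_zero, zero_add]

end LinearLift

omit [Fintype V] in
theorem exists_perm_apply_eq_apply_eq {a b z z' : V} (hab : a ≠ b) (hzz' : z ≠ z') :
    ∃ σ : Equiv.Perm V, σ a = z ∧ σ b = z' := by
  set b' := Equiv.swap a z b
  have hb'z : b' ≠ z := fun h => hab ((Equiv.swap a z).injective (by
    rw [Equiv.swap_apply_left]; exact h.symm))
  refine ⟨(Equiv.swap a z).trans (Equiv.swap b' z'), ?_, ?_⟩
  · simp [Equiv.swap_apply_of_ne_of_ne hb'z.symm hzz']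
  · simp [b']

omit [DecidableEq V] in
theorem sum_sum_sub_sq (φ : V → ℝ) :
    ∑ z, ∑ z', (φ z - φ z') ^ 2 = 2 * (Fintype.card V * ∑ z, φ z ^ 2 - (∑ z, φ z) ^ 2) := by
  have hexpand : ∀ z z', (φ z - φ z') ^ 2 = φ z ^ 2 + φ z' ^ 2 - 2 * (φ z * φ z') :=
    fun _ _ => by ring
  simp only [hexpand, Finset.sum_add_distrib, Finset.sum_sub_distrib, Finset.sum_const,
    Finset.card_univ, nsmul_eq_mul, ← Finset.mul_sum, ← Finset.sum_mul]
  ring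

section Mean

variable {m : ℕ} {μ : (V → ℕ) → ℝ}

theorem meanOn_sum {ι : Type*} (s : Finset ι) (f : ι → (V → ℕ) → ℝ) :
    meanOn V m μ (fun η => ∑ i ∈ s, f i η) = ∑ i ∈ s, meanOn V m μ (f i) := by
  simp only [meanOn, Finset.mul_sum]
  exact Finset.sum_comm

theorem meanOn_const_mul (c : ℝ) (f : (V → ℕ) → ℝ) :
    meanOn V m μ (fun η => c * f η) = c * meanOn V m μ f := by
  simp only [meanOn, Finset.mul_sum]
  exact Finset.sum_congr rfl fun η _ => by ring

theorem meanOn_sub (f g : (V → ℕ) → ℝ) :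
    meanOn V m μ (fun η => f η - g η) = meanOn V m μ f - meanOn V m μ g := by
  simp only [meanOn, mul_sub, Finset.sum_sub_distrib]

theorem meanOn_congr {f g : (V → ℕ) → ℝ} (h : ∀ η ∈ configs V m, f η = g η) :
    meanOn V m μ f = meanOn V m μ g :=
  Finset.sum_congr rfl fun η hη => by rw [h η hη]

end Mean

section Exchangeable

variable {m : ℕ} {μ : (V → ℕ) → ℝ}

theorem meanOn_comp_perm (hexch : ∀ (σ : Equiv.Perm V) η, μ (η ∘ σ) = μ η)
    (σ : Equiv.Perm V) (g : (V → ℕ) → ℝ) :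
    meanOn V m μ (fun η => g (η ∘ σ)) = meanOn V m μ g := by
  refine (Finset.sum_congr rfl fun η _ => ?_).trans (sum_configs_comp_perm σ fun η => μ η * g η)
  rw [hexch]

theorem meanOn_coord_mul_coord (hexch : ∀ (σ : Equiv.Perm V) η, μ (η ∘ σ) = μ η)
    {a b z z' : V} (hab : a ≠ b) (hzz' : z ≠ z') :
    meanOn V m μ (fun η => (η z : ℝ) * η z') = meanOn V m μ (fun η => (η a : ℝ) * η b) := by
  obtain ⟨σ, rfl, rfl⟩ := exists_perm_apply_eq_apply_eq hab hzz'
  exact meanOn_comp_perm hexch σ fun η => (η a : ℝ) * η b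

theorem meanOn_coord (hμ1 : ∑ η ∈ configs V m, μ η = 1)
    (hexch : ∀ (σ : Equiv.Perm V) η, μ (η ∘ σ) = μ η) (z : V) :
    meanOn V m μ (fun η => (η z : ℝ)) = m / Fintype.card V := by
  have hall : ∀ z', meanOn V m μ (fun η => (η z' : ℝ)) = meanOn V m μ (fun η => (η z : ℝ)) :=
    fun z' => by simpa using meanOn_comp_perm hexch (Equiv.swap z z') fun η => (η z : ℝ)
  have htotal : ∑ z', meanOn V m μ (fun η => (η z' : ℝ)) = m := by
    rw [← meanOn_sum, meanOn_congr (g := fun _ => (m : ℝ) * 1) fun η hη => by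
      rw [mul_one, ← Nat.cast_sum, mem_configs.mp hη], meanOn_const_mul]
    simp [meanOn, hμ1]
  simp only [hall, Finset.sum_const, Finset.card_univ, nsmul_eq_mul] at htotal
  have : Nonempty V := ⟨z⟩
  have : (Fintype.card V : ℝ) ≠ 0 := Nat.cast_ne_zero.mpr Fintype.card_ne_zero
  field_simp
  linarith

end Exchangeable

section Variance

variable {m : ℕ} {μ : (V → ℕ) → ℝ}

/-- The diagonal terms of `linearLift_sq` vanish, so exchangeability leaves a single
off-diagonal moment. -/
theorem varOn_linearLift (hμ1 : ∑ η ∈ configs V m, μ η = 1)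
    (hexch : ∀ (σ : Equiv.Perm V) η, μ (η ∘ σ) = μ η) {a b : V} (hab : a ≠ b) (φ : V → ℝ) :
    varOn V m μ (linearLift φ)
      = ((m / Fintype.card V) ^ 2 - meanOn V m μ (fun η => (η a : ℝ) * η b))
        * (Fintype.card V * ∑ z, φ z ^ 2 - (∑ z, φ z) ^ 2) := by
  set κ := meanOn V m μ (fun η => (η a : ℝ) * η b)
  have hmean : meanOn V m μ (linearLift φ) = m / Fintype.card V * ∑ z, φ z := by
    change meanOn V m μ (fun η => ∑ z, φ z * (η z : ℝ)) = _
    simp only [meanOn_sum, meanOn_const_mul, meanOn_coord hμ1 hexch, Finset.mul_sum]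
    exact Finset.sum_congr rfl fun z _ => mul_comm (φ z) _
  have hoff : ∀ z z', (φ z - φ z') ^ 2 / 2 * meanOn V m μ (fun η => (η z : ℝ) * η z')
      = (φ z - φ z') ^ 2 / 2 * κ := by
    intro z z'
    rcases eq_or_ne z z' with rfl | hzz'
    · simp
    · rw [meanOn_coord_mul_coord hexch hab hzz']
  have hsq : meanOn V m μ (fun η => linearLift φ η ^ 2)
      = m * (m / Fintype.card V) * ∑ z, φ z ^ 2 - κ / 2 * ∑ z, ∑ z', (φ z - φ z') ^ 2 := by
    simp only [meanOn_congr fun η hη => linearLift_sq hη φ, meanOn_sub, meanOn_sum,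
      meanOn_const_mul, meanOn_coord hμ1 hexch, hoff, Finset.mul_sum]
    congr 1
    · exact Finset.sum_congr rfl fun z _ => by ring
    · exact Finset.sum_congr rfl fun z _ => Finset.sum_congr rfl fun z' _ => by ring
  have : Nonempty V := ⟨a⟩
  have hcard : (Fintype.card V : ℝ) ≠ 0 := Nat.cast_ne_zero.mpr Fintype.card_ne_zero
  rw [varOn, hsq, hmean, sum_sum_sub_sq]
  field_simp
  ring

theorem card_sub_one_mul_varOn_linearLift (hμ1 : ∑ η ∈ configs V m, μ η = 1)
    (hexch : ∀ (σ : Equiv.Perm V) η, μ (η ∘ σ) = μ η) (hV : 1 < Fintype.card V) (x₀ : V)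
    (φ : V → ℝ) :
    (Fintype.card V - 1) * varOn V m μ (linearLift φ)
      = varOn V m μ (fun η => (η x₀ : ℝ)) * (Fintype.card V * ∑ z, φ z ^ 2 - (∑ z, φ z) ^ 2) := by
  obtain ⟨a, b, hab⟩ := Fintype.exists_pair_of_one_lt_card hV
  have hcoord : linearLift (Pi.single x₀ 1) = fun η => (η x₀ : ℝ) := by
    funext η
    simp [linearLift, Pi.single_apply]
  have hsingle := varOn_linearLift hμ1 hexch hab (Pi.single x₀ 1)
  have hsq : ∑ z, (Pi.single x₀ 1 : V → ℝ) z ^ 2 = 1 := by simp [Pi.single_apply]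
  rw [hcoord, hsq, Fintype.sum_pi_single', one_pow, mul_one] at hsingle
  rw [varOn_linearLift hμ1 hexch hab φ, hsingle]
  ring

theorem varOn_eq_sum_sq (hμ1 : ∑ η ∈ configs V m, μ η = 1) (f : (V → ℕ) → ℝ) :
    varOn V m μ f = ∑ η ∈ configs V m, μ η * (f η - meanOn V m μ f) ^ 2 := by
  have hexpand : ∀ η, μ η * (f η - meanOn V m μ f) ^ 2
      = μ η * f η ^ 2 - 2 * meanOn V m μ f * (μ η * f η) + meanOn V m μ f ^ 2 * μ η :=
    fun _ => by ring
  simp only [hexpand, Finset.sum_add_distrib, Finset.sum_sub_distrib, ← Finset.mul_sum, hμ1]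
  rw [varOn, ← meanOn, ← meanOn]
  ring

theorem varOn_pos_of_ne (hμ1 : ∑ η ∈ configs V m, μ η = 1)
    (hμ : ∀ η ∈ configs V m, 0 < μ η) {f : (V → ℕ) → ℝ} {η₁ η₂ : V → ℕ}
    (h₁ : η₁ ∈ configs V m) (h₂ : η₂ ∈ configs V m) (hne : f η₁ ≠ f η₂) :
    0 < varOn V m μ f := by
  rw [varOn_eq_sum_sq hμ1]
  refine Finset.sum_pos' (fun η hη => mul_nonneg (hμ η hη).le (sq_nonneg _)) ?_
  obtain ⟨η, hη, hdev⟩ : ∃ η ∈ configs V m, f η - meanOn V m μ f ≠ 0 := by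
    by_cases hmean : f η₁ = meanOn V m μ f
    · exact ⟨η₂, h₂, sub_ne_zero.mpr (hmean ▸ hne.symm)⟩
    · exact ⟨η₁, h₁, sub_ne_zero.mpr hmean⟩
  exact ⟨η, hη, mul_pos (hμ η hη) (by positivity)⟩

theorem varOn_coord_pos (hμ1 : ∑ η ∈ configs V (m + 1), μ η = 1)
    (hμ : ∀ η ∈ configs V (m + 1), 0 < μ η) {x₀ y₀ : V} (hne : y₀ ≠ x₀) :
    0 < varOn V (m + 1) μ (fun η => (η x₀ : ℝ)) :=
  varOn_pos_of_ne hμ1 hμ (single_mem_configs x₀ _) (single_mem_configs y₀ _)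
    (by simpa [hne] using Nat.cast_add_one_ne_zero m)

end Variance

omit [DecidableEq V] in
theorem card_sq_mul_varPi_uniform [Nonempty V] (φ : V → ℝ) :
    Fintype.card V ^ 2 * varPi V (fun _ => (Fintype.card V : ℝ)⁻¹) φ
      = Fintype.card V * ∑ z, φ z ^ 2 - (∑ z, φ z) ^ 2 := by
  have hcard : (Fintype.card V : ℝ) ≠ 0 := Nat.cast_ne_zero.mpr Fintype.card_ne_zero
  rw [varPi, ← Finset.mul_sum, ← Finset.mul_sum]
  field_simp

omit [DecidableEq V] in
theorem varPi_uniform_nonneg [Nonempty V] (φ : V → ℝ) :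
    0 ≤ varPi V (fun _ => (Fintype.card V : ℝ)⁻¹) φ := by
  refine nonneg_of_mul_nonneg_right ?_ (by positivity : (0 : ℝ) < Fintype.card V ^ 2)
  rw [card_sq_mul_varPi_uniform, sub_nonneg]
  simpa using sq_sum_le_card_mul_sum_sq (s := Finset.univ) (f := φ)

theorem zrp_poincare_upper_bound_general (n m : ℕ) (hn : 2 ≤ n) (hm : 1 ≤ m)
    (P : Fin n → Fin n → ℝ)
    (hProw : ∀ x, ∑ y, P x y = 1)
    (hPcol : ∀ y, ∑ x, P x y = 1)
    (r : ℕ → ℝ) (hr : ∀ k, 1 ≤ k → 0 < r k) (hr0 : r 0 = 0)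
    (μ : (Fin n → ℕ) → ℝ)
    (hμ : ∀ η, μ η = weight (Fin n) (fun _ => (n : ℝ)⁻¹) (fun _ k => r k) η
        / ∑ ξ ∈ configs (Fin n) m, weight (Fin n) (fun _ => (n : ℝ)⁻¹) (fun _ k => r k) ξ)
    (lamP : ℝ)
    (hlam2 : ∃ φ : Fin n → ℝ, varPi (Fin n) (fun _ => (n : ℝ)⁻¹) φ ≠ 0 ∧
      EP (Fin n) (fun _ => (n : ℝ)⁻¹) P φ φ = lamP * varPi (Fin n) (fun _ => (n : ℝ)⁻¹) φ)
    (lamZ : ℝ)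
    (hZ1 : ∀ f : (Fin n → ℕ) → ℝ,
      lamZ * varOn (Fin n) m μ f ≤ EZRP (Fin n) P (fun _ k => r k) μ m f f)
    (x₀ : Fin n) :
    lamZ ≤ (1 - (n : ℝ)⁻¹) * lamP
        * (meanOn (Fin n) m μ (fun η => r (η x₀))
            / varOn (Fin n) m μ (fun η => (η x₀ : ℝ))) := by
  obtain ⟨m, rfl⟩ : ∃ k, m = k + 1 := ⟨m - 1, by omega⟩
  obtain rfl : μ = stationaryLaw (fun _ => (n : ℝ)⁻¹) (fun _ k => r k) (m + 1) := funext hμ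
  obtain ⟨φ, hφ, hφEP⟩ := hlam2
  have : NeZero n := ⟨by omega⟩
  have hN : (1 : ℝ) < n := by exact_mod_cast hn
  have hcard : 1 < Fintype.card (Fin n) := by simpa using hN
  have hr' : ∀ k, r (k + 1) ≠ 0 := fun k => (hr (k + 1) k.succ_pos).ne'
  have hπ : ∀ _ : Fin n, (0 : ℝ) < (n : ℝ)⁻¹ := fun _ => by positivity
  have hZ := partitionFn_pos (r := fun _ k => r k) (m := m + 1) hπ fun _ k hk => hr k hk
  have hμpos := stationaryLaw_pos (r := fun _ k => r k) (m := m + 1) hπ fun _ k hk => hr k hk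
  have hμ1 := sum_stationaryLaw hZ.ne'
  obtain ⟨y₀, hy₀⟩ := Fintype.exists_ne_of_one_lt_card hcard x₀
  have hv := varOn_coord_pos hμ1 (fun η _ => hμpos η) hy₀
  have hpi := (varPi_uniform_nonneg φ).lt_of_ne' (by simpa using hφ)
  have hEZ := EZRP_linearLift_stationaryLaw hProw (π := fun _ => (n : ℝ)⁻¹)
    (fun y => by rw [← Finset.mul_sum, hPcol, mul_one]) (fun _ => hr0) (fun _ => hr') m φ
  have hvar := card_sub_one_mul_varOn_linearLift hμ1 (stationaryLaw_comp_perm _ r) hcard x₀ φ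
  rw [← card_sq_mul_varPi_uniform] at hvar
  simp only [Fintype.card_fin] at hvar hpi
  have key := mul_le_mul_of_nonneg_left (hZ1 (linearLift φ)) (sub_pos.mpr hN).le
  rw [← mul_assoc, mul_comm _ lamZ, mul_assoc, hvar, hEZ, hφEP] at key
  rw [meanOn_rate hr0 hr']
  refine le_of_mul_le_mul_right (key.trans_eq ?_) (by positivity : (0 : ℝ) < _)
  field_simp [hv.ne', hZ.ne']

/-- general upper bound on the ZRP Poincaré constant for a doubly
stochastic jump matrix and homogeneous rates. -/
theorem zrp_poincare_upper_bound (n m : ℕ) (hn : 2 ≤ n) (hm : 1 ≤ m)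
    (P : Fin n → Fin n → ℝ)
    (hP0 : ∀ x y, 0 ≤ P x y) (hProw : ∀ x, ∑ y, P x y = 1)
    (hPcol : ∀ y, ∑ x, P x y = 1)
    (r : ℕ → ℝ) (hr : ∀ k, 1 ≤ k → 0 < r k) (hr0 : r 0 = 0)
    (μ : (Fin n → ℕ) → ℝ)
    (hμ : ∀ η, μ η = weight (Fin n) (fun _ => (n : ℝ)⁻¹) (fun _ k => r k) η
        / ∑ ξ ∈ configs (Fin n) m, weight (Fin n) (fun _ => (n : ℝ)⁻¹) (fun _ k => r k) ξ)
    (lamP : ℝ)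
    (hlam1 : ∀ φ : Fin n → ℝ,
      lamP * varPi (Fin n) (fun _ => (n : ℝ)⁻¹) φ ≤ EP (Fin n) (fun _ => (n : ℝ)⁻¹) P φ φ)
    (hlam2 : ∃ φ : Fin n → ℝ, varPi (Fin n) (fun _ => (n : ℝ)⁻¹) φ ≠ 0 ∧
      EP (Fin n) (fun _ => (n : ℝ)⁻¹) P φ φ = lamP * varPi (Fin n) (fun _ => (n : ℝ)⁻¹) φ)
    (lamZ : ℝ)
    (hZ1 : ∀ f : (Fin n → ℕ) → ℝ,
      lamZ * varOn (Fin n) m μ f ≤ EZRP (Fin n) P (fun _ k => r k) μ m f f)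
    (hZ2 : ∃ f : (Fin n → ℕ) → ℝ, varOn (Fin n) m μ f ≠ 0 ∧
      EZRP (Fin n) P (fun _ k => r k) μ m f f = lamZ * varOn (Fin n) m μ f)
    (x₀ : Fin n) :
    lamZ ≤ (1 - (n : ℝ)⁻¹) * lamP
        * (meanOn (Fin n) m μ (fun η => r (η x₀))
            / varOn (Fin n) m μ (fun η => (η x₀ : ℝ))) :=
  zrp_poincare_upper_bound_general n m hn hm P hProw hPcol r hr hr0 μ hμ lamP hlam2 lamZ hZ1 x₀
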